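/- arXiv:2011.05562 — 6 statements merged into one kernel-verified Lean document; each statement's English description precedes it below -/
import Mathlib

section
/- Let d₁, d₂ be positive integers, A a d₁×d₁ real symmetric matrix, D a d₂×d₂ real symmetric matrix, and Z an arbitrary d₁×d₂ real matrix. Let J be the (d₁+d₂)×(d₁+d₂) block matrix J = [[A, Z], [−Zᵀ, D]]. Set λ⁻ = min(λmin(A), λmin(D)) and λ⁺ = max(λmax(A), λmax(D)). Then every real eigenvalue μ of J satisfies λ⁻ ≤ μ ≤ λ⁺. -/
/-!
A real eigenvalue `μ` of the complexified matrix `J = [[A, Z], [-Zᵀ, D]]` is an eigenvalue of `J`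
itself, so it has a real eigenvector `v = (x, y) ≠ 0`. In the quadratic form `v ⬝ᵥ J v` the
off-diagonal blocks cancel, since `x ⬝ᵥ Z y = y ⬝ᵥ Zᵀ x`, which leaves
`μ (‖x‖² + ‖y‖²) = x ⬝ᵥ A x + y ⬝ᵥ D y`. The Rayleigh bounds for the symmetric blocks `A` and `D`
then trap `μ` between `min (λmin A) (λmin D)` and `max (λmax A) (λmax D)`.
-/

open Matrix

/-- Smallest eigenvalue of a Hermitian (real symmetric) matrix. -/
noncomputable def lamMin {n : Type*} [Fintype n] [DecidableEq n] {A : Matrix n n ℝ}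
    (hA : A.IsHermitian) : ℝ := ⨅ i, hA.eigenvalues i

/-- Largest eigenvalue of a Hermitian (real symmetric) matrix. -/
noncomputable def lamMax {n : Type*} [Fintype n] [DecidableEq n] {A : Matrix n n ℝ}
    (hA : A.IsHermitian) : ℝ := ⨆ i, hA.eigenvalues i

section MinMax

variable {α : Type*} [Semiring α] [LinearOrder α] [IsOrderedRing α] {a b p q : α}

theorem min_mul_add_le_mul_add (hp : 0 ≤ p) (hq : 0 ≤ q) : min a b * (p + q) ≤ a * p + b * q := by
  rw [mul_add]
  gcongr
  exacts [min_le_left a b, min_le_right a b]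

theorem mul_add_le_max_mul_add (hp : 0 ≤ p) (hq : 0 ≤ q) : a * p + b * q ≤ max a b * (p + q) := by
  rw [mul_add]
  gcongr
  exacts [le_max_left a b, le_max_right a b]

end MinMax

namespace Matrix

open scoped MatrixOrder

theorem algebraMap_mem_spectrum_map_iff {K L n : Type*} [Field K] [Field L] [Algebra K L]
    [Fintype n] [DecidableEq n] (M : Matrix n n K) (r : K) :
    algebraMap K L r ∈ spectrum L (M.map (algebraMap K L)) ↔ r ∈ spectrum K M := by
  rw [mem_spectrum_iff_isRoot_charpoly, mem_spectrum_iff_isRoot_charpoly, charpoly_map,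
    Polynomial.isRoot_map_iff (algebraMap K L).injective]

theorem exists_mulVec_eq_smul_of_mem_spectrum {K n : Type*} [Field K] [Fintype n] [DecidableEq n]
    {M : Matrix n n K} {r : K} (hr : r ∈ spectrum K M) : ∃ v ≠ 0, M *ᵥ v = r • v := by
  rw [← spectrum_toLin', ← Module.End.hasEigenvalue_iff_mem_spectrum] at hr
  obtain ⟨v, hv⟩ := hr.exists_hasEigenvector
  exact ⟨v, hv.2, by simpa using hv.apply_eq_smul⟩

theorem algebraMap_mulVec {R n : Type*} [CommRing R] [Fintype n] [DecidableEq n] (c : R)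
    (x : n → R) : algebraMap R (Matrix n n R) c *ᵥ x = c • x := by
  rw [Algebra.algebraMap_eq_smul_one, smul_mulVec, one_mulVec]

section Rayleigh

variable {n : Type*} [Fintype n] [DecidableEq n] {A : Matrix n n ℝ}

theorem algebraMap_lamMin_le (hA : A.IsHermitian) :
    algebraMap ℝ (Matrix n n ℝ) (lamMin hA) ≤ A := by
  refine (algebraMap_le_iff_le_spectrum hA.isSelfAdjoint).2 fun r hr => ?_
  obtain ⟨i, rfl⟩ := hA.spectrum_real_eq_range_eigenvalues ▸ hr
  exact ciInf_le (Set.finite_range _).bddBelow i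

theorem le_algebraMap_lamMax (hA : A.IsHermitian) :
    A ≤ algebraMap ℝ (Matrix n n ℝ) (lamMax hA) := by
  refine (le_algebraMap_iff_spectrum_le hA.isSelfAdjoint).2 fun r hr => ?_
  obtain ⟨i, rfl⟩ := hA.spectrum_real_eq_range_eigenvalues ▸ hr
  exact le_ciSup (Set.finite_range _).bddAbove i

theorem lamMin_mul_dotProduct_self_le (hA : A.IsHermitian) (x : n → ℝ) :
    lamMin hA * (x ⬝ᵥ x) ≤ x ⬝ᵥ A *ᵥ x := by
  have := (le_iff.1 (algebraMap_lamMin_le hA)).dotProduct_mulVec_nonneg x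
  rw [star_trivial, sub_mulVec, algebraMap_mulVec, dotProduct_sub, dotProduct_smul,
    smul_eq_mul] at this
  linarith

theorem dotProduct_mulVec_le_lamMax_mul (hA : A.IsHermitian) (x : n → ℝ) :
    x ⬝ᵥ A *ᵥ x ≤ lamMax hA * (x ⬝ᵥ x) := by
  have := (le_iff.1 (le_algebraMap_lamMax hA)).dotProduct_mulVec_nonneg x
  rw [star_trivial, sub_mulVec, algebraMap_mulVec, dotProduct_sub, dotProduct_smul,
    smul_eq_mul] at this
  linarith

end Rayleigh

theorem sumElim_dotProduct_fromBlocks_neg_transpose_mulVec {R m n : Type*} [CommRing R]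
    [Fintype m] [Fintype n] (A : Matrix m m R) (D : Matrix n n R) (Z : Matrix m n R)
    (x : m → R) (y : n → R) :
    (x ⊕ᵥ y) ⬝ᵥ fromBlocks A Z (-Zᵀ) D *ᵥ (x ⊕ᵥ y) = x ⬝ᵥ A *ᵥ x + y ⬝ᵥ D *ᵥ y := by
  have hZ : y ⬝ᵥ Zᵀ *ᵥ x = x ⬝ᵥ Z *ᵥ y := by
    rw [dotProduct_mulVec, vecMul_transpose, dotProduct_comm]
  simp only [fromBlocks_mulVec, Sum.elim_comp_inl, Sum.elim_comp_inr, sumElim_dotProduct_sumElim,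
    dotProduct_add, neg_mulVec, dotProduct_neg, hZ]
  ring

end Matrix

theorem stmt0_general {d₁ d₂ : ℕ}
    (A : Matrix (Fin d₁) (Fin d₁) ℝ) (D : Matrix (Fin d₂) (Fin d₂) ℝ)
    (Z : Matrix (Fin d₁) (Fin d₂) ℝ)
    (hA : A.IsHermitian) (hD : D.IsHermitian)
    (μ : ℝ)
    (hμ : (μ : ℂ) ∈ spectrum ℂ ((Matrix.fromBlocks A Z (-Zᵀ) D).map (algebraMap ℝ ℂ))) :
    min (lamMin hA) (lamMin hD) ≤ μ ∧ μ ≤ max (lamMax hA) (lamMax hD) := by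
  obtain ⟨v, hv0, hv⟩ := exists_mulVec_eq_smul_of_mem_spectrum
    ((algebraMap_mem_spectrum_map_iff _ μ).1 hμ)
  obtain ⟨x, y, rfl⟩ : ∃ x y, v = x ⊕ᵥ y := ⟨_, _, (Sum.elim_comp_inl_inr v).symm⟩
  have hquad : μ * (x ⬝ᵥ x + y ⬝ᵥ y) = x ⬝ᵥ A *ᵥ x + y ⬝ᵥ D *ᵥ y := by
    rw [← sumElim_dotProduct_fromBlocks_neg_transpose_mulVec, hv, dotProduct_smul,
      sumElim_dotProduct_sumElim, smul_eq_mul]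
  have hpos : 0 < x ⬝ᵥ x + y ⬝ᵥ y := by
    simpa [← sumElim_dotProduct_sumElim] using dotProduct_star_self_pos_iff.2 hv0
  have hx : 0 ≤ x ⬝ᵥ x := by simpa using dotProduct_star_self_nonneg x
  have hy : 0 ≤ y ⬝ᵥ y := by simpa using dotProduct_star_self_nonneg y
  constructor
  · refine le_of_mul_le_mul_right ?_ hpos
    calc _ ≤ lamMin hA * (x ⬝ᵥ x) + lamMin hD * (y ⬝ᵥ y) := min_mul_add_le_mul_add hx hy
      _ ≤ _ := hquad ▸ add_le_add
          (lamMin_mul_dotProduct_self_le hA x) (lamMin_mul_dotProduct_self_le hD y)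
  · refine le_of_mul_le_mul_right ?_ hpos
    calc _ ≤ lamMax hA * (x ⬝ᵥ x) + lamMax hD * (y ⬝ᵥ y) := hquad ▸ add_le_add
          (dotProduct_mulVec_le_lamMax_mul hA x) (dotProduct_mulVec_le_lamMax_mul hD y)
      _ ≤ _ := mul_add_le_max_mul_add hx hy

theorem stmt0 {d₁ d₂ : ℕ} (hd₁ : 0 < d₁) (hd₂ : 0 < d₂)
    (A : Matrix (Fin d₁) (Fin d₁) ℝ) (D : Matrix (Fin d₂) (Fin d₂) ℝ)
    (Z : Matrix (Fin d₁) (Fin d₂) ℝ)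
    (hA : A.IsHermitian) (hD : D.IsHermitian)
    (μ : ℝ)
    (hμ : (μ : ℂ) ∈ spectrum ℂ ((Matrix.fromBlocks A Z (-Zᵀ) D).map (algebraMap ℝ ℂ))) :
    min (lamMin hA) (lamMin hD) ≤ μ ∧ μ ≤ max (lamMax hA) (lamMax hD) :=
  stmt0_general A D Z hA hD μ hμ
end

section
/- Let d₁, d₂ be positive integers, A a d₁×d₁ real symmetric negative definite matrix, D a d₂×d₂ real symmetric negative definite matrix, and Z an arbitrary d₁×d₂ real matrix. Then the block matrix J = [[A, Z], [−Zᵀ, D]] is Hurwitz: every eigenvalue of J has strictly negative real part. -/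
/-!
If `J v = μ v` with `v ≠ 0`, then `v* (J + Jᵀ) v = 2 (Re μ) ‖v‖²`, so `Re μ < 0` as soon as the
symmetric part `J + Jᵀ` is negative definite. For `J = [[A, Z], [-Zᵀ, D]]` the off-diagonal blocks
cancel in `J + Jᵀ = diag(A + Aᵀ, D + Dᵀ)`, which is negative definite.
-/

open Matrix
open scoped ComplexOrder

namespace Matrix

theorem PosDef.fromBlocks_zero_zero {m n R : Type*} [Fintype m] [Fintype n] [Ring R]
    [PartialOrder R] [StarRing R] [IsOrderedCancelAddMonoid R]
    {A : Matrix m m R} {D : Matrix n n R} (hA : A.PosDef) (hD : D.PosDef) :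
    (fromBlocks A 0 0 D).PosDef := by
  refine posDef_iff_dotProduct_mulVec.mpr ⟨hA.isHermitian.fromBlocks (by simp) hD.isHermitian, ?_⟩
  intro x hx
  obtain ⟨x₁, x₂, rfl⟩ : ∃ x₁ x₂, x = Sum.elim x₁ x₂ := ⟨_, _, (Sum.elim_comp_inl_inr x).symm⟩
  simp only [fromBlocks_mulVec, Sum.elim_comp_inl, Sum.elim_comp_inr, zero_mulVec, add_zero,
    zero_add, Function.star_sumElim, sumElim_dotProduct_sumElim]
  by_cases h₁ : x₁ = 0
  · have h₂ : x₂ ≠ 0 := by rintro rfl; exact hx (by simp [h₁])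
    exact add_pos_of_nonneg_of_pos (hA.posSemidef.dotProduct_mulVec_nonneg x₁)
      (hD.dotProduct_mulVec_pos h₂)
  · exact add_pos_of_pos_of_nonneg (hA.dotProduct_mulVec_pos h₁)
      (hD.posSemidef.dotProduct_mulVec_nonneg x₂)

theorem PosDef.map_algebraMap_complex {n : Type*} [Fintype n] {P : Matrix n n ℝ}
    (hP : P.PosDef) : (P.map (algebraMap ℝ ℂ)).PosDef := by
  classical
  open scoped MatrixOrder in
  obtain ⟨B, hB, rfl⟩ :=
    CStarAlgebra.isStrictlyPositive_iff_eq_star_mul_self.mp hP.isStrictlyPositive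
  rw [Matrix.map_mul, star_eq_conjTranspose, conjTranspose_map _ fun _ ↦ by simp]
  exact .conjTranspose_mul_self _
    (mulVec_injective_iff_isUnit.mpr (hB.map (algebraMap ℝ ℂ).mapMatrix))

theorem re_lt_zero_of_mem_spectrum {n : Type*} [Fintype n] [DecidableEq n] {M : Matrix n n ℂ}
    (hM : (-(M + Mᴴ)).PosDef) {μ : ℂ} (hμ : μ ∈ spectrum ℂ M) : μ.re < 0 := by
  rw [← spectrum_toLin', ← Module.End.hasEigenvalue_iff_mem_spectrum] at hμ
  obtain ⟨v, hv⟩ := hμ.exists_hasEigenvector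
  have hMv : M *ᵥ v = μ • v := by simpa using hv.apply_eq_smul
  have hform : star v ⬝ᵥ (-(M + Mᴴ)) *ᵥ v = (-(2 * μ.re) : ℝ) * (star v ⬝ᵥ v) := by
    rw [neg_mulVec, add_mulVec, dotProduct_neg, dotProduct_add, dotProduct_mulVec (star v) Mᴴ,
      ← star_mulVec, hMv, dotProduct_smul, star_smul, smul_dotProduct, smul_eq_mul, smul_eq_mul,
      ← add_mul, Complex.star_def, Complex.add_conj]
    push_cast
    ring
  have hpos := hM.dotProduct_mulVec_pos hv.2
  rw [hform] at hpos
  have := Complex.zero_lt_real.mp (pos_of_mul_pos_left hpos (dotProduct_star_self_nonneg v))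
  linarith

theorem re_lt_zero_of_mem_spectrum_map {n : Type*} [Fintype n] [DecidableEq n] {J : Matrix n n ℝ}
    (hJ : (-(J + Jᵀ)).PosDef) {μ : ℂ} (hμ : μ ∈ spectrum ℂ (J.map (algebraMap ℝ ℂ))) :
    μ.re < 0 := by
  refine re_lt_zero_of_mem_spectrum ?_ hμ
  rw [← conjTranspose_map _ fun _ ↦ by simp, conjTranspose_eq_transpose_of_trivial,
    ← Matrix.map_add _ (map_add _), ← Matrix.map_neg _ (map_neg _)]
  exact hJ.map_algebraMap_complex

end Matrix

theorem stmt4_general {d₁ d₂ : ℕ}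
    (A : Matrix (Fin d₁) (Fin d₁) ℝ) (D : Matrix (Fin d₂) (Fin d₂) ℝ)
    (Z : Matrix (Fin d₁) (Fin d₂) ℝ)
    (hA : (-A).PosDef) (hD : (-D).PosDef) :
    ∀ μ ∈ spectrum ℂ ((Matrix.fromBlocks A Z (-Zᵀ) D).map (algebraMap ℝ ℂ)), μ.re < 0 := by
  intro μ hμ
  refine re_lt_zero_of_mem_spectrum_map ?_ hμ
  have hsymm : -(fromBlocks A Z (-Zᵀ) D + (fromBlocks A Z (-Zᵀ) D)ᵀ) =
      fromBlocks (-A + (-A)ᵀ) 0 0 (-D + (-D)ᵀ) := by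
    simp [fromBlocks_transpose, fromBlocks_add, fromBlocks_neg, add_comm]
  rw [hsymm]
  exact (hA.add hA.transpose).fromBlocks_zero_zero (hD.add hD.transpose)

theorem stmt4 {d₁ d₂ : ℕ} (hd₁ : 0 < d₁) (hd₂ : 0 < d₂)
    (A : Matrix (Fin d₁) (Fin d₁) ℝ) (D : Matrix (Fin d₂) (Fin d₂) ℝ)
    (Z : Matrix (Fin d₁) (Fin d₂) ℝ)
    (hA : (-A).PosDef) (hD : (-D).PosDef) :
    ∀ μ ∈ spectrum ℂ ((Matrix.fromBlocks A Z (-Zᵀ) D).map (algebraMap ℝ ℂ)), μ.re < 0 :=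
  stmt4_general A D Z hA hD
end

section
/- Let d₁, d₂ be positive integers and let A, B, C, D be complex matrices of sizes d₁×d₁, d₁×d₂, d₂×d₁, d₂×d₂, and let J = [[A, B], [C, D]]. Then for every eigenvalue μ of J there exist unit vectors v ∈ ℂ^{d₁} and w ∈ ℂ^{d₂} such that μ is an eigenvalue of the 2×2 complex matrix J_{v,w} = [[v*Av, v*Bw], [w*Cv, w*Dw]]; equivalently, μ² − μ·(v*Av + w*Dw) + (v*Av)(w*Dw) − (v*Bw)(w*Cv) = 0. That is, the spectrum of J is contained in its quadratic numerical range. -/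
open Matrix

lemma stmt12_normalize {n : ℕ} (hn : 0 < n) (x : Fin n → ℂ) :
    ∃ (v : Fin n → ℂ) (c : ℂ), x = c • v ∧ star v ⬝ᵥ v = 1 := by
  by_cases hx : x = 0
  · refine ⟨Pi.single ⟨0, hn⟩ 1, 0, by simp [hx], ?_⟩
    simp [dotProduct, Pi.single_apply]
  · have hr : (0:ℝ) < ∑ i, Complex.normSq (x i) := by
      obtain ⟨i, hi⟩ : ∃ i, x i ≠ 0 := by
        by_contra h; push_neg at h; exact hx (funext h)
      exact Finset.sum_pos' (fun j _ => Complex.normSq_nonneg _)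
        ⟨i, Finset.mem_univ i, Complex.normSq_pos.mpr hi⟩
    set r : ℝ := ∑ i, Complex.normSq (x i) with hrdef
    have hdot : star x ⬝ᵥ x = (r : ℂ) := by
      simp only [dotProduct, Pi.star_apply, hrdef]
      push_cast
      refine Finset.sum_congr rfl fun i _ => ?_
      rw [Complex.normSq_eq_conj_mul_self]; rfl
    set t : ℝ := Real.sqrt r with htdef
    have ht : 0 < t := Real.sqrt_pos.mpr hr
    have ht2 : (t:ℂ) * t = (r:ℂ) := by
      norm_cast; exact Real.mul_self_sqrt hr.le
    refine ⟨(t:ℂ)⁻¹ • x, (t:ℂ), ?_, ?_⟩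
    · rw [smul_smul, mul_inv_cancel₀ (by exact_mod_cast ht.ne'), one_smul]
    · have : star ((t:ℂ)⁻¹ • x) = (t:ℂ)⁻¹ • star x := by
        funext i; simp [star_smul, Complex.conj_inv]
      rw [this, smul_dotProduct, dotProduct_smul, hdot, smul_eq_mul, smul_eq_mul]
      rw [← ht2]
      field_simp
      exact div_self (by exact_mod_cast ht.ne')

lemma stmt12_two {a b c d μ p q : ℂ} (hpq : ¬(p = 0 ∧ q = 0))
    (h1 : a * p + b * q = μ * p) (h2 : c * p + d * q = μ * q) :
    μ ∈ spectrum ℂ !![a, b; c, d] ∧ μ ^ 2 - μ * (a + d) + a * d - b * c = 0 := by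
  set M : Matrix (Fin 2) (Fin 2) ℂ := μ • (1 : Matrix (Fin 2) (Fin 2) ℂ) - !![a, b; c, d] with hM
  have hu : (![p, q] : Fin 2 → ℂ) ≠ 0 := by
    intro h
    exact hpq ⟨congrFun h 0, congrFun h 1⟩
  have hmv : M *ᵥ ![p, q] = 0 := by
    funext i
    fin_cases i
    · simp [hM, mulVec, dotProduct, Fin.sum_univ_two, Matrix.one_apply]
      linear_combination -h1
    · simp [hM, mulVec, dotProduct, Fin.sum_univ_two, Matrix.one_apply]
      linear_combination -h2
  have hdet : M.det = 0 := (Matrix.exists_mulVec_eq_zero_iff).mp ⟨![p, q], hu, hmv⟩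
  constructor
  · rw [spectrum.mem_iff, Algebra.algebraMap_eq_smul_one]
    intro hunit
    rw [Matrix.isUnit_iff_isUnit_det] at hunit
    rw [← hM] at hunit
    rw [hdet] at hunit
    exact (not_isUnit_zero hunit)
  · have : M.det = (μ - a) * (μ - d) - b * c := by
      rw [Matrix.det_fin_two]
      simp [hM, Matrix.one_apply]
    rw [this] at hdet
    linear_combination hdet

theorem stmt12 {d₁ d₂ : ℕ} (hd₁ : 0 < d₁) (hd₂ : 0 < d₂)
    (A : Matrix (Fin d₁) (Fin d₁) ℂ) (B : Matrix (Fin d₁) (Fin d₂) ℂ)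
    (C : Matrix (Fin d₂) (Fin d₁) ℂ) (D : Matrix (Fin d₂) (Fin d₂) ℂ)
    (μ : ℂ) (hμ : μ ∈ spectrum ℂ (Matrix.fromBlocks A B C D)) :
    ∃ v : Fin d₁ → ℂ, ∃ w : Fin d₂ → ℂ,
      star v ⬝ᵥ v = 1 ∧ star w ⬝ᵥ w = 1 ∧
      μ ∈ spectrum ℂ
        !![star v ⬝ᵥ (A *ᵥ v), star v ⬝ᵥ (B *ᵥ w);
           star w ⬝ᵥ (C *ᵥ v), star w ⬝ᵥ (D *ᵥ w)] ∧
      μ ^ 2 - μ * (star v ⬝ᵥ (A *ᵥ v) + star w ⬝ᵥ (D *ᵥ w)) +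
          (star v ⬝ᵥ (A *ᵥ v)) * (star w ⬝ᵥ (D *ᵥ w)) -
          (star v ⬝ᵥ (B *ᵥ w)) * (star w ⬝ᵥ (C *ᵥ v)) = 0 := by
  set J := Matrix.fromBlocks A B C D with hJ
  -- eigenvector from spectrum membership
  have hnu : ¬ IsUnit (μ • (1 : Matrix (Fin d₁ ⊕ Fin d₂) (Fin d₁ ⊕ Fin d₂) ℂ) - J) := by
    rw [spectrum.mem_iff, Algebra.algebraMap_eq_smul_one] at hμ
    exact hμ
  have hdet : (μ • (1 : Matrix (Fin d₁ ⊕ Fin d₂) (Fin d₁ ⊕ Fin d₂) ℂ) - J).det = 0 := by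
    by_contra h
    exact hnu ((Matrix.isUnit_iff_isUnit_det _).mpr (isUnit_iff_ne_zero.mpr h))
  obtain ⟨z, hz0, hz⟩ := (Matrix.exists_mulVec_eq_zero_iff).mpr hdet
  set x : Fin d₁ → ℂ := z ∘ Sum.inl with hx
  set y : Fin d₂ → ℂ := z ∘ Sum.inr with hy
  have hzel : z = Sum.elim x y := by funext i; cases i <;> rfl
  have heig : J *ᵥ z = μ • z := by
    have := hz
    rw [Matrix.sub_mulVec, Matrix.smul_mulVec, Matrix.one_mulVec, sub_eq_zero] at this
    exact this.symm
  rw [hzel] at heig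
  rw [hJ, Matrix.fromBlocks_mulVec] at heig
  have h1 : A *ᵥ x + B *ᵥ y = μ • x := by
    funext i
    have := congrFun heig (Sum.inl i)
    simpa using this
  have h2 : C *ᵥ x + D *ᵥ y = μ • y := by
    funext i
    have := congrFun heig (Sum.inr i)
    simpa using this
  obtain ⟨v, c, hxc, hv⟩ := stmt12_normalize hd₁ x
  obtain ⟨w, e, hye, hw⟩ := stmt12_normalize hd₂ y
  have hce : ¬(c = 0 ∧ e = 0) := by
    rintro ⟨rfl, rfl⟩
    apply hz0
    rw [hzel]
    simp at hxc hye
    rw [hxc, hye]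
    funext i; cases i <;> rfl
  set a := star v ⬝ᵥ (A *ᵥ v)
  set b := star v ⬝ᵥ (B *ᵥ w)
  set c₂ := star w ⬝ᵥ (C *ᵥ v)
  set d₂' := star w ⬝ᵥ (D *ᵥ w)
  have e1 : a * c + b * e = μ * c := by
    have := congrArg (fun u => star v ⬝ᵥ u) h1
    simpa [hxc, hye, Matrix.mulVec_smul, dotProduct_add, dotProduct_smul, hv,
      mul_comm, smul_eq_mul] using this
  have e2 : c₂ * c + d₂' * e = μ * e := by
    have := congrArg (fun u => star w ⬝ᵥ u) h2
    simpa [hxc, hye, Matrix.mulVec_smul, dotProduct_add, dotProduct_smul, hw,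
      mul_comm, smul_eq_mul] using this
  obtain ⟨hs, hp⟩ := stmt12_two hce e1 e2
  exact ⟨v, w, hv, hw, hs, by linear_combination hp⟩
end

section
/- Let a, d be strictly negative real numbers, z a complex number, and τ > 0 a real number. Then both eigenvalues of the 2×2 complex matrix [[a, z], [−τ·conj(z), τ·d]] have strictly negative real part. -/
open Matrix

theorem stmt14 (a d : ℝ) (ha : a < 0) (hd : d < 0) (z : ℂ) (τ : ℝ) (hτ : 0 < τ) :
    ∀ μ ∈ spectrum ℂ !![(a : ℂ), z; -(τ : ℂ) * (starRingEnd ℂ) z, (τ : ℂ) * (d : ℂ)],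
      μ.re < 0 := by
  intro μ hμ
  rw [spectrum.mem_iff, Matrix.isUnit_iff_isUnit_det, isUnit_iff_ne_zero, not_ne_iff] at hμ
  have hdet : (μ - a) * (μ - τ * d) + τ * (z * (starRingEnd ℂ) z) = 0 := by
    rw [← hμ]
    simp [Matrix.det_fin_two, Matrix.algebraMap_matrix_apply, Matrix.sub_apply]
    ring
  have hzz : (z * (starRingEnd ℂ) z) = (Complex.normSq z : ℂ) := Complex.mul_conj z
  rw [hzz] at hdet
  have hre := congrArg Complex.re hdet
  have him := congrArg Complex.im hdet
  simp [Complex.add_re, Complex.add_im, Complex.mul_re, Complex.mul_im, Complex.sub_re,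
    Complex.sub_im] at hre him
  have hnsq : 0 ≤ Complex.normSq z := Complex.normSq_nonneg z
  have hτd : τ * d < 0 := mul_neg_of_pos_of_neg hτ hd
  rcases mul_eq_zero.mp (show μ.im * ((μ.re - a) + (μ.re - τ * d)) = 0 by linarith [him]; ) with hy | hx
  · by_contra hx
    push_neg at hx
    nlinarith [mul_nonneg hτ.le hnsq]
  · linarith
end

section
/- Let a, d be strictly negative real numbers, p a complex number with a·d > |p|², and τ > 0 a real number. Then both eigenvalues of the 2×2 complex matrix [[a, p], [τ·conj(p), τ·d]] have strictly negative real part. -/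
open Matrix Polynomial

/-!
A `2 × 2` matrix with negative real trace and positive real determinant is Hurwitz stable:
its eigenvalues are the roots of `z ^ 2 - t z + D`, and a complex root `x + i y` with `y ≠ 0`
has `x = t / 2`, while a real root cannot be nonnegative since then `x ^ 2 - t x + D > 0`.
For the matrix of the theorem, `t = a + τ d < 0` and `D = τ (a d - ‖p‖ ^ 2) > 0`, because
`p * conj p = ‖p‖ ^ 2`.
-/

theorem Complex.re_neg_of_sq_sub_mul_add_eq_zero {t D : ℝ} (ht : t < 0) (hD : 0 < D) {z : ℂ}
    (hz : z ^ 2 - t * z + D = 0) : z.re < 0 := by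
  have hre : z.re ^ 2 - z.im ^ 2 - t * z.re + D = 0 := by
    simpa [sq] using congrArg Complex.re hz
  have him : z.im * (2 * z.re - t) = 0 := by
    have := congrArg Complex.im hz
    simp only [sq, sub_im, add_im, mul_im, ofReal_re, ofReal_im, zero_im] at this
    linear_combination this
  rcases mul_eq_zero.mp him with hy | hx
  · rw [hy] at hre
    nlinarith
  · linarith

theorem Matrix.sq_sub_trace_mul_add_det_eq_zero_of_mem_spectrum {K : Type*} [Field K]
    {A : Matrix (Fin 2) (Fin 2) K} {μ : K} (hμ : μ ∈ spectrum K A) :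
    μ ^ 2 - A.trace * μ + A.det = 0 := by
  simpa [charpoly_fin_two] using (mem_spectrum_iff_isRoot_charpoly.mp hμ).eq_zero

theorem Matrix.re_neg_of_mem_spectrum_fin_two {A : Matrix (Fin 2) (Fin 2) ℂ} {t D : ℝ}
    (ht : t < 0) (hD : 0 < D) (htrace : A.trace = t) (hdet : A.det = D) :
    ∀ μ ∈ spectrum ℂ A, μ.re < 0 := fun _ hμ =>
  Complex.re_neg_of_sq_sub_mul_add_eq_zero ht hD <| by
    simpa [htrace, hdet] using sq_sub_trace_mul_add_det_eq_zero_of_mem_spectrum hμ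

theorem stmt15 (a d : ℝ) (ha : a < 0) (hd : d < 0) (p : ℂ)
    (hp : ‖p‖ ^ 2 < a * d) (τ : ℝ) (hτ : 0 < τ) :
    ∀ μ ∈ spectrum ℂ !![(a : ℂ), p; (τ : ℂ) * (starRingEnd ℂ) p, (τ : ℂ) * (d : ℂ)],
      μ.re < 0 := by
  refine re_neg_of_mem_spectrum_fin_two (t := a + τ * d) (D := τ * (a * d - ‖p‖ ^ 2))
    (by nlinarith) (mul_pos hτ (sub_pos.mpr hp)) ?_ ?_
  · simp [trace_fin_two]
  · have hpp : p * starRingEnd ℂ p = (‖p‖ ^ 2 : ℝ) := by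
      rw [Complex.mul_conj, Complex.normSq_eq_norm_sq]
    rw [det_fin_two_of]
    push_cast at hpp ⊢
    linear_combination (-(τ : ℂ)) * hpp
end

section
/- Let d₁, d₂ be positive integers, A, B, C, D complex matrices of sizes d₁×d₁, d₁×d₂, d₂×d₁, d₂×d₂, and J = [[A, B], [C, D]]. For all unit vectors v ∈ ℂ^{d₁} and w ∈ ℂ^{d₂}, every eigenvalue μ of the 2×2 matrix J_{v,w} = [[v*Av, v*Bw], [w*Cv, w*Dw]] lies in the numerical range of J: there exists a unit vector x ∈ ℂ^{d₁+d₂} with x*Jx = μ. That is, the quadratic numerical range is contained in the numerical range. -/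
/-!
Let `V : ℂ² → ℂ^{d₁+d₂}` be the isometry with columns `(v, 0)` and `(0, w)`; then
`J_{v,w} = Vᴴ J V`. An eigenvalue of a matrix lies in its numerical range (evaluate the
quadratic form at a unit eigenvector), and `W(Vᴴ J V) ⊆ W(J)` because `V` maps unit vectors
to unit vectors and `star ξ ⬝ᵥ Vᴴ J V ξ = star (V ξ) ⬝ᵥ J (V ξ)`.
-/

open Matrix

namespace Matrix

section Compression

variable {R : Type*} [CommSemiring R] [StarRing R] {m n : Type*} [Fintype m]

theorem star_mulVec_dotProduct_mulVec_mulVec [Fintype n] (V : Matrix m n R) (M : Matrix m m R)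
    (ξ : n → R) : star (V *ᵥ ξ) ⬝ᵥ (M *ᵥ (V *ᵥ ξ)) = star ξ ⬝ᵥ ((Vᴴ * M * V) *ᵥ ξ) := by
  simp only [star_mulVec, dotProduct_mulVec, vecMul_vecMul, Matrix.mul_assoc]

theorem conjTranspose_mul_mul_apply (V : Matrix m n R) (M : Matrix m m R) (i j : n) :
    (Vᴴ * M * V) i j = star (fun k ↦ V k i) ⬝ᵥ (M *ᵥ fun k ↦ V k j) := by
  simp only [mul_apply, conjTranspose_apply, mulVec, dotProduct, Pi.star_apply, Finset.sum_mul,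
    Finset.mul_sum, mul_assoc]
  exact Finset.sum_comm

end Compression

section NumericalRange

variable {𝕜 : Type*} [RCLike 𝕜] {m n : Type*} [Fintype m] [Fintype n]

def numericalRange (M : Matrix n n 𝕜) : Set 𝕜 :=
  {z | ∃ x : n → 𝕜, star x ⬝ᵥ x = 1 ∧ star x ⬝ᵥ (M *ᵥ x) = z}

theorem star_dotProduct_self_eq_ofReal (x : n → 𝕜) :
    star x ⬝ᵥ x = ((∑ i, ‖x i‖ ^ 2 : ℝ) : 𝕜) := by
  simp [dotProduct, RCLike.conj_mul]

theorem exists_smul_star_dotProduct_self_eq_one {x : n → 𝕜} (hx : x ≠ 0) :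
    ∃ c : 𝕜, star (c • x) ⬝ᵥ (c • x) = 1 := by
  set r := ∑ i, ‖x i‖ ^ 2
  have hr : 0 < r := by
    obtain ⟨i, hi⟩ := Function.ne_iff.mp hx
    exact Finset.sum_pos' (fun j _ => by positivity)
      ⟨i, Finset.mem_univ _, pow_pos (norm_pos_iff.mpr hi) 2⟩
  refine ⟨((√r)⁻¹ : ℝ), ?_⟩
  rw [star_smul, smul_dotProduct, dotProduct_smul, star_dotProduct_self_eq_ofReal,
    RCLike.star_def, RCLike.conj_ofReal, smul_eq_mul, smul_eq_mul, ← RCLike.ofReal_mul,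
    ← RCLike.ofReal_mul, ← mul_assoc, ← mul_inv, Real.mul_self_sqrt hr.le,
    inv_mul_cancel₀ hr.ne', RCLike.ofReal_one]

theorem spectrum_subset_numericalRange [DecidableEq n] (M : Matrix n n 𝕜) :
    spectrum 𝕜 M ⊆ numericalRange M := by
  intro μ hμ
  rw [← spectrum_toLin', ← Module.End.hasEigenvalue_iff_mem_spectrum] at hμ
  obtain ⟨ξ, hξ⟩ := hμ.exists_hasEigenvector
  obtain ⟨c, hc⟩ := exists_smul_star_dotProduct_self_eq_one hξ.2
  have hMξ : M *ᵥ ξ = μ • ξ := by simpa using hξ.apply_eq_smul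
  refine ⟨c • ξ, hc, ?_⟩
  rw [mulVec_smul, hMξ, smul_comm, dotProduct_smul, hc, smul_eq_mul, mul_one]

theorem numericalRange_conjTranspose_mul_mul_subset [DecidableEq m] [DecidableEq n]
    {V : Matrix m n 𝕜} (hV : Vᴴ * V = 1) (M : Matrix m m 𝕜) :
    numericalRange (Vᴴ * M * V) ⊆ numericalRange M := by
  rintro z ⟨ξ, hξ, rfl⟩
  refine ⟨V *ᵥ ξ, ?_, star_mulVec_dotProduct_mulVec_mulVec V M ξ⟩
  simpa [hV, hξ] using star_mulVec_dotProduct_mulVec_mulVec V 1 ξ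

end NumericalRange

section BlockColumns

variable {𝕜 : Type*} [RCLike 𝕜] {m₁ m₂ : Type*} [Fintype m₁] [Fintype m₂]

def blockColumns (v : m₁ → 𝕜) (w : m₂ → 𝕜) : Matrix (m₁ ⊕ m₂) (Fin 2) 𝕜 :=
  of fun k j ↦ ![Sum.elim v 0, Sum.elim 0 w] j k

theorem conjTranspose_mul_fromBlocks_mul_blockColumns (v : m₁ → 𝕜) (w : m₂ → 𝕜)
    (A : Matrix m₁ m₁ 𝕜) (B : Matrix m₁ m₂ 𝕜) (C : Matrix m₂ m₁ 𝕜) (D : Matrix m₂ m₂ 𝕜) :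
    (blockColumns v w)ᴴ * fromBlocks A B C D * blockColumns v w =
      !![star v ⬝ᵥ (A *ᵥ v), star v ⬝ᵥ (B *ᵥ w); star w ⬝ᵥ (C *ᵥ v), star w ⬝ᵥ (D *ᵥ w)] := by
  ext i j
  simp only [conjTranspose_mul_mul_apply, blockColumns, of_apply]
  fin_cases i <;> fin_cases j <;>
    simp [fromBlocks_mulVec, Function.star_sumElim, sumElim_dotProduct_sumElim]

theorem conjTranspose_blockColumns_mul_self [DecidableEq m₁] [DecidableEq m₂]
    {v : m₁ → 𝕜} {w : m₂ → 𝕜} (hv : star v ⬝ᵥ v = 1) (hw : star w ⬝ᵥ w = 1) :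
    (blockColumns v w)ᴴ * blockColumns v w = 1 := by
  have h := conjTranspose_mul_fromBlocks_mul_blockColumns v w 1 0 0 1
  rw [fromBlocks_one, Matrix.mul_one] at h
  rw [h]
  ext i j
  fin_cases i <;> fin_cases j <;> simp [hv, hw]

end BlockColumns

end Matrix

theorem stmt18_general {d₁ d₂ : ℕ}
    (A : Matrix (Fin d₁) (Fin d₁) ℂ) (B : Matrix (Fin d₁) (Fin d₂) ℂ)
    (C : Matrix (Fin d₂) (Fin d₁) ℂ) (D : Matrix (Fin d₂) (Fin d₂) ℂ) :
    ∀ v : Fin d₁ → ℂ, ∀ w : Fin d₂ → ℂ, star v ⬝ᵥ v = 1 → star w ⬝ᵥ w = 1 →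
      ∀ μ ∈ spectrum ℂ
          !![star v ⬝ᵥ (A *ᵥ v), star v ⬝ᵥ (B *ᵥ w);
             star w ⬝ᵥ (C *ᵥ v), star w ⬝ᵥ (D *ᵥ w)],
        ∃ x : (Fin d₁ ⊕ Fin d₂) → ℂ,
          star x ⬝ᵥ x = 1 ∧ star x ⬝ᵥ ((Matrix.fromBlocks A B C D) *ᵥ x) = μ := by
  intro v w hv hw μ hμ
  rw [← conjTranspose_mul_fromBlocks_mul_blockColumns] at hμ
  exact numericalRange_conjTranspose_mul_mul_subset (conjTranspose_blockColumns_mul_self hv hw) _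
    (spectrum_subset_numericalRange _ hμ)

theorem stmt18 {d₁ d₂ : ℕ} (hd₁ : 0 < d₁) (hd₂ : 0 < d₂)
    (A : Matrix (Fin d₁) (Fin d₁) ℂ) (B : Matrix (Fin d₁) (Fin d₂) ℂ)
    (C : Matrix (Fin d₂) (Fin d₁) ℂ) (D : Matrix (Fin d₂) (Fin d₂) ℂ) :
    ∀ v : Fin d₁ → ℂ, ∀ w : Fin d₂ → ℂ, star v ⬝ᵥ v = 1 → star w ⬝ᵥ w = 1 →
      ∀ μ ∈ spectrum ℂ
          !![star v ⬝ᵥ (A *ᵥ v), star v ⬝ᵥ (B *ᵥ w);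
             star w ⬝ᵥ (C *ᵥ v), star w ⬝ᵥ (D *ᵥ w)],
        ∃ x : (Fin d₁ ⊕ Fin d₂) → ℂ,
          star x ⬝ᵥ x = 1 ∧ star x ⬝ᵥ ((Matrix.fromBlocks A B C D) *ᵥ x) = μ :=
  stmt18_general A B C D
end
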